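/- arXiv:1805.03452 — 4 statements merged into one kernel-verified Lean document; each statement's English description precedes it below -/
import Mathlib

section
/- Let F be a field and let f₁, …, f_n ∈ F[u,v] be polynomials, not all zero, whose greatest common divisor is a unit (the f_i have no common non-constant factor). Let m be the minimum, over the nonzero f_i, of the multiplicity of f_i at the origin. Then the greatest common divisor of the polynomials f₁(u·v, v), …, f_n(u·v, v) is associated to v^m. -/
/-!
The chart `φ : u ↦ u v, v ↦ v` sends the monomial `u^a v^b` to `u^a v^(a+b)`, so it is injective
and `v^k ∣ φ f` exactly when every monomial of `f` has total degree at least `k`. This gives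
`v^m ∣ φ (f i)` and bounds the `v`-part of a common divisor `g = v^k h` of the `φ (f i)` by `v^m`.
For the part `h` prime to `v`: after inverting `v` the chart is onto, so some `φ q` equals `h`
up to a power of `v`, and `q` divides `v^N f i` for every `i`. Stripping the powers of `v` from `q`
leaves a common divisor of the `f i`, hence a unit, and then `h` divides a unit.
-/

open MvPolynomial

theorem Irreducible.dvd_of_dvd_pow_mul_of_not_dvd {α : Type*} [CommMonoidWithZero α]
    [DecompositionMonoid α] {x p q : α} {k : ℕ} (hx : Irreducible x) (hp : ¬ x ∣ p)
    (h : p ∣ x ^ k * q) : p ∣ q :=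
  ((hx.isRelPrime_iff_not_dvd.2 hp).symm.pow_right).dvd_of_dvd_mul_left h

namespace MvPolynomial

variable {σ R : Type*} [CommSemiring R]

theorem X_pow_dvd_iff {i : σ} {k : ℕ} {p : MvPolynomial σ R} :
    X i ^ k ∣ p ↔ ∀ d ∈ p.support, k ≤ d i := by
  classical
  rw [X_pow_eq_monomial, monomial_one_dvd_iff_modMonomial_eq_zero]
  constructor
  · intro h d hd
    by_contra hlt
    have := coeff_modMonomial_of_not_le p (mt Finsupp.single_le_iff.1 hlt)
    rw [h, coeff_zero] at this
    exact mem_support_iff.1 hd this.symm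
  · intro h
    ext d
    by_cases hd : Finsupp.single i k ≤ d
    · rw [coeff_modMonomial_of_le p hd, coeff_zero]
    · rw [coeff_modMonomial_of_not_le p hd, coeff_zero]
      exact notMem_support_iff.1 fun hmem => hd (Finsupp.single_le_iff.2 (h d hmem))

variable (R) in
noncomputable def blowupChart : MvPolynomial (Fin 2) R →ₐ[R] MvPolynomial (Fin 2) R :=
  aeval ![X 0 * X 1, X 1]

theorem blowupChart_apply (p : MvPolynomial (Fin 2) R) :
    blowupChart R p = aeval ![X 0 * X 1, X 1] p :=
  rfl

@[simp]
theorem blowupChart_X_zero : blowupChart R (X 0) = X 0 * X 1 := by simp [blowupChart]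

@[simp]
theorem blowupChart_X_one : blowupChart R (X 1) = X 1 := by simp [blowupChart]

noncomputable def blowupExponent (d : Fin 2 →₀ ℕ) : Fin 2 →₀ ℕ := d + Finsupp.single 1 (d 0)

@[simp]
theorem blowupExponent_apply_zero (d : Fin 2 →₀ ℕ) : blowupExponent d 0 = d 0 := by
  simp [blowupExponent]

@[simp]
theorem blowupExponent_apply_one (d : Fin 2 →₀ ℕ) : blowupExponent d 1 = d 1 + d 0 := by
  simp [blowupExponent]

theorem blowupExponent_injective : Function.Injective blowupExponent := by
  intro d e h
  have h0 := congrArg (· 0) h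
  have h1 := congrArg (· 1) h
  simp only [blowupExponent_apply_zero, blowupExponent_apply_one] at h0 h1
  ext i
  fin_cases i <;> simp <;> omega

theorem blowupChart_monomial (d : Fin 2 →₀ ℕ) (r : R) :
    blowupChart R (monomial d r) = monomial (blowupExponent d) r := by
  rw [monomial_fin_two, monomial_fin_two]
  simp only [map_mul, map_pow, blowupChart_X_zero, blowupChart_X_one, algHom_C,
    blowupExponent_apply_zero, blowupExponent_apply_one, algebraMap_eq]
  ring

theorem coeff_blowupChart (p : MvPolynomial (Fin 2) R) (d : Fin 2 →₀ ℕ) :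
    coeff (blowupExponent d) (blowupChart R p) = coeff d p := by
  classical
  induction p using MvPolynomial.induction_on' with
  | monomial e r =>
    simp only [blowupChart_monomial, coeff_monomial, blowupExponent_injective.eq_iff]
  | add p q hp hq => simp only [map_add, coeff_add, hp, hq]

theorem coeff_blowupChart_of_notMem_range (p : MvPolynomial (Fin 2) R) {e : Fin 2 →₀ ℕ}
    (he : e ∉ Set.range blowupExponent) : coeff e (blowupChart R p) = 0 := by
  classical
  induction p using MvPolynomial.induction_on' with
  | monomial d r =>
    rw [blowupChart_monomial, coeff_monomial, if_neg fun h => he ⟨d, h⟩]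
  | add p q hp hq => simp only [map_add, coeff_add, hp, hq, add_zero]

theorem support_blowupChart [DecidableEq (Fin 2 →₀ ℕ)] (p : MvPolynomial (Fin 2) R) :
    (blowupChart R p).support = p.support.image blowupExponent := by
  ext e
  simp only [Finset.mem_image, mem_support_iff]
  constructor
  · intro he
    by_cases hr : e ∈ Set.range blowupExponent
    · obtain ⟨d, rfl⟩ := hr
      exact ⟨d, by rwa [coeff_blowupChart] at he, rfl⟩
    · exact absurd (coeff_blowupChart_of_notMem_range p hr) he
  · rintro ⟨d, hd, rfl⟩
    rwa [coeff_blowupChart]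

theorem blowupChart_injective : Function.Injective (blowupChart R) := fun p q h => by
  ext d
  rw [← coeff_blowupChart p, ← coeff_blowupChart q, h]

theorem X_one_pow_dvd_blowupChart_iff {k : ℕ} {p : MvPolynomial (Fin 2) R} :
    X 1 ^ k ∣ blowupChart R p ↔ ∀ d ∈ p.support, k ≤ d 0 + d 1 := by
  classical
  simp only [X_pow_dvd_iff, support_blowupChart, Finset.forall_mem_image,
    blowupExponent_apply_one, add_comm]

/-- The chart becomes surjective once `v` is inverted, as `u = (u v) / v`. -/
theorem exists_blowupChart_eq_X_one_pow_mul (r : MvPolynomial (Fin 2) R) :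
    ∃ (l : ℕ) (s : MvPolynomial (Fin 2) R), blowupChart R s = X 1 ^ l * r := by
  induction r using MvPolynomial.induction_on with
  | C a => exact ⟨0, C a, by simp⟩
  | add p q hp hq =>
    obtain ⟨l, s, hs⟩ := hp
    obtain ⟨l', s', hs'⟩ := hq
    exact ⟨l + l', X 1 ^ l' * s + X 1 ^ l * s', by
      simp only [map_add, map_mul, map_pow, blowupChart_X_one, hs, hs']
      ring⟩
  | mul_X p i hp =>
    obtain ⟨l, s, hs⟩ := hp
    match i with
    | 0 => exact ⟨l + 1, s * X 0, by simp only [map_mul, hs, blowupChart_X_zero]; ring⟩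
    | 1 => exact ⟨l, s * X 1, by simp only [map_mul, hs, blowupChart_X_one]; ring⟩

theorem isUnit_of_dvd_blowupChart {R ι : Type*} [CommRing R] [IsDomain R]
    [UniqueFactorizationMonoid R] {f : ι → MvPolynomial (Fin 2) R}
    (hf : ∀ g, (∀ i, g ∣ f i) → IsUnit g) {h : MvPolynomial (Fin 2) R} (hh : ¬ X 1 ∣ h)
    (hdvd : ∀ i, h ∣ blowupChart R (f i)) : IsUnit h := by
  have hX : Irreducible (X 1 : MvPolynomial (Fin 2) R) := X_prime.irreducible
  obtain ⟨a, q, hq⟩ := exists_blowupChart_eq_X_one_pow_mul h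
  have hq0 : q ≠ 0 := by
    rintro rfl
    rw [map_zero, zero_eq_mul] at hq
    exact hh (hq.resolve_left (pow_ne_zero _ hX.ne_zero) ▸ dvd_zero _)
  obtain ⟨c, q', hq', rfl⟩ := WfDvdMonoid.max_power_factor hq0 hX
  have hq'f : ∀ i, q' ∣ f i := by
    intro i
    obtain ⟨r, hr⟩ := hdvd i
    obtain ⟨b, s, hs⟩ := exists_blowupChart_eq_X_one_pow_mul r
    have hlift : X 1 ^ c * q' * s = X 1 ^ (a + b) * f i := blowupChart_injective <| by
      simp only [map_mul, map_pow, blowupChart_X_one, hq, hs, hr]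
      ring
    exact hX.dvd_of_dvd_pow_mul_of_not_dvd hq' ⟨X 1 ^ c * s, by rw [← hlift]; ring⟩
  have hunit : IsUnit (blowupChart R q') := (hf q' hq'f).map _
  refine isUnit_of_dvd_unit (hX.dvd_of_dvd_pow_mul_of_not_dvd (k := c) hh ⟨X 1 ^ a, ?_⟩) hunit
  rw [mul_comm h, ← hq, map_mul, map_pow, blowupChart_X_one]

end MvPolynomial

theorem gcd_of_blowup_pullbacks_general (F : Type*) [Field F] (n : ℕ)
    (f : Fin n → MvPolynomial (Fin 2) F)
    (hgcd : ∀ g : MvPolynomial (Fin 2) F, (∀ i, g ∣ f i) → IsUnit g)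
    (m : ℕ)
    (hmin : ∀ i, f i ≠ 0 → ∀ d ∈ (f i).support, m ≤ d 0 + d 1)
    (hatt : ∃ i, f i ≠ 0 ∧ ∃ d ∈ (f i).support, d 0 + d 1 = m) :
    (∀ i, (X 1 : MvPolynomial (Fin 2) F) ^ m ∣
        aeval ![(X 0 : MvPolynomial (Fin 2) F) * X 1, X 1] (f i)) ∧
      ∀ g : MvPolynomial (Fin 2) F,
        (∀ i, g ∣ aeval ![(X 0 : MvPolynomial (Fin 2) F) * X 1, X 1] (f i)) →
          g ∣ (X 1 : MvPolynomial (Fin 2) F) ^ m := by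
  simp only [← blowupChart_apply]
  refine ⟨fun i => X_one_pow_dvd_blowupChart_iff.2 fun d hd =>
    hmin i (fun h0 => by simp [h0] at hd) d hd, fun g hg => ?_⟩
  obtain ⟨i₀, hf₀, d₀, hd₀, rfl⟩ := hatt
  have hg₀ : g ≠ 0 := by
    rintro rfl
    exact hf₀ (blowupChart_injective (by simpa using hg i₀))
  obtain ⟨k, h, hh, rfl⟩ := WfDvdMonoid.max_power_factor hg₀ (X_prime (i := 1)).irreducible
  have hk : k ≤ d₀ 0 + d₀ 1 :=
    X_one_pow_dvd_blowupChart_iff.1 ((dvd_mul_right _ _).trans (hg i₀)) d₀ hd₀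
  have hunit : IsUnit h :=
    isUnit_of_dvd_blowupChart hgcd hh fun i => (dvd_mul_left _ _).trans (hg i)
  exact hunit.mul_right_dvd.2 (pow_dvd_pow _ hk)

/-- Let `F` be a field and `f₁, …, f_n ∈ F[u,v]` polynomials, not all
zero, with no common non-constant factor (their gcd is a unit).  Let `m` be the minimum,
over the nonzero `f i`, of the multiplicity of `f i` at the origin (expressed below by:
`m` is a lower bound for the total degrees of the supports of the nonzero `f i`, and is
attained on the support of some nonzero `f i`).  Then `v^m` is a greatest common divisor
of the pullbacks `f i (u·v, v)`: it divides all of them, and every common divisor of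
them divides `v^m` (i.e. the gcd is associated to `v^m`).
Here `u = X 0`, `v = X 1`. -/
theorem gcd_of_blowup_pullbacks (F : Type*) [Field F] (n : ℕ)
    (f : Fin n → MvPolynomial (Fin 2) F)
    (hne : ∃ i, f i ≠ 0)
    (hgcd : ∀ g : MvPolynomial (Fin 2) F, (∀ i, g ∣ f i) → IsUnit g)
    (m : ℕ)
    (hmin : ∀ i, f i ≠ 0 → ∀ d ∈ (f i).support, m ≤ d 0 + d 1)
    (hatt : ∃ i, f i ≠ 0 ∧ ∃ d ∈ (f i).support, d 0 + d 1 = m) :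
    (∀ i, (X 1 : MvPolynomial (Fin 2) F) ^ m ∣
        aeval ![(X 0 : MvPolynomial (Fin 2) F) * X 1, X 1] (f i)) ∧
      ∀ g : MvPolynomial (Fin 2) F,
        (∀ i, g ∣ aeval ![(X 0 : MvPolynomial (Fin 2) F) * X 1, X 1] (f i)) →
          g ∣ (X 1 : MvPolynomial (Fin 2) F) ^ m :=
  gcd_of_blowup_pullbacks_general F n f hgcd m hmin hatt
end

section
/- The set of polynomials f ∈ ℂ[u,v] of total degree at most 2 such that f(0,0) = 0, f(1,−i) = 0, f(1,i) = 0, and such that f(u·v, v) is divisible by v with the quotient f(u·v,v)/v vanishing at (0,0), is a 2-dimensional ℂ-linear subspace equal to the span of {u² + v², u + v²}. -/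
/-!
A polynomial of total degree at most two is a conic
`a + b u + c v + d u² + e u v + k v²`. In the chart, `f(u v, v) = a + v (c + b u + k v + e u v + d u² v)`,
so the infinitely near basepoint imposes exactly `a = c = 0`. The conditions at `(1, ±i)` then read
`b + d - k ± i e = 0`, i.e. `e = 0` and `k = b + d`, leaving `d (u² + v²) + b (u + v²)`.
-/

open MvPolynomial

section Conic

variable {R : Type*} [CommSemiring R]

noncomputable def conic (a b c d e k : R) : MvPolynomial (Fin 2) R :=
  C a + C b * X 0 + C c * X 1 + C d * X 0 ^ 2 + C e * (X 0 * X 1) + C k * X 1 ^ 2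

open Finsupp in
lemma conic_eq_sum_monomial (a b c d e k : R) :
    conic a b c d e k = monomial 0 a + monomial (single 0 1) b + monomial (single 1 1) c +
      monomial (single 0 2) d + monomial (single 0 1 + single 1 1) e + monomial (single 1 2) k := by
  rw [conic, X_pow_eq_monomial, X_pow_eq_monomial]
  simp only [C_apply, X, monomial_mul, mul_one, zero_add]

lemma totalDegree_conic_le (a b c d e k : R) : (conic a b c d e k).totalDegree ≤ 2 := by
  rw [conic_eq_sum_monomial]
  repeat refine (totalDegree_add _ _).trans (max_le ?_ ?_)
  all_goals
    refine (totalDegree_monomial_le _ _).trans ?_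
    simp [Finsupp.sum_add_index']

lemma eq_conic_of_totalDegree_le_two {f : MvPolynomial (Fin 2) R} (hf : f.totalDegree ≤ 2) :
    f = conic (coeff 0 f) (coeff (Finsupp.single 0 1) f) (coeff (Finsupp.single 1 1) f)
      (coeff (Finsupp.single 0 2) f) (coeff (Finsupp.single 0 1 + Finsupp.single 1 1) f)
      (coeff (Finsupp.single 1 2) f) := by
  ext m
  obtain ⟨i, j, rfl⟩ : ∃ i j, m = Finsupp.single 0 i + Finsupp.single 1 j :=
    ⟨m 0, m 1, by ext l; fin_cases l <;> simp⟩
  by_cases hij : i + j ≤ 2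
  · obtain ⟨hi, hj⟩ : i ≤ 2 ∧ j ≤ 2 - i := by omega
    interval_cases i <;> interval_cases j <;>
      simp [conic_eq_sum_monomial, coeff_monomial, Finsupp.ext_iff, Fin.forall_fin_two]
  · have hlt (p : MvPolynomial (Fin 2) R) (hp : p.totalDegree ≤ 2) :
        p.totalDegree < ∑ l ∈ (Finsupp.single 0 i + Finsupp.single 1 j : Fin 2 →₀ ℕ).support,
          (Finsupp.single 0 i + Finsupp.single 1 j : Fin 2 →₀ ℕ) l := by
      rw [← Finsupp.degree_apply, map_add, Finsupp.degree_single, Finsupp.degree_single]; omega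
    rw [coeff_eq_zero_of_totalDegree_lt (hlt f hf),
      coeff_eq_zero_of_totalDegree_lt (hlt _ (totalDegree_conic_le ..))]

@[simp]
lemma eval_conic (a b c d e k x y : R) :
    eval ![x, y] (conic a b c d e k) = a + b * x + c * y + d * x ^ 2 + e * (x * y) + k * y ^ 2 := by
  simp [conic]

lemma conic_eq_zero_iff {a b c d e k : R} :
    conic a b c d e k = 0 ↔ a = 0 ∧ b = 0 ∧ c = 0 ∧ d = 0 ∧ e = 0 ∧ k = 0 := by
  refine ⟨fun h ↦ ?_, fun ⟨ha, hb, hc, hd, he, hk⟩ ↦ by simp [conic, ha, hb, hc, hd, he, hk]⟩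
  have hcoeff (m : Fin 2 →₀ ℕ) : coeff m (conic a b c d e k) = 0 := by rw [h, coeff_zero]
  simp only [conic_eq_sum_monomial, coeff_add, coeff_monomial] at hcoeff
  refine ⟨?_, ?_, ?_, ?_, ?_, ?_⟩
  · simpa using hcoeff 0
  · simpa [Finsupp.ext_iff] using hcoeff (.single 0 1)
  · simpa [Finsupp.ext_iff] using hcoeff (.single 1 1)
  · simpa [Finsupp.ext_iff] using hcoeff (.single 0 2)
  · simpa [Finsupp.ext_iff] using hcoeff (.single 0 1 + .single 1 1)
  · simpa [Finsupp.ext_iff] using hcoeff (.single 1 2)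

lemma aeval_blowup_conic (a b c d e k : R) :
    aeval ![(X 0 : MvPolynomial (Fin 2) R) * X 1, X 1] (conic a b c d e k) =
      C a + X 1 * (C c + C b * X 0 + C k * X 1 + C e * (X 0 * X 1) + C d * (X 0 ^ 2 * X 1)) := by
  simp only [conic, map_add, map_mul, map_pow, aeval_C, aeval_X, algebraMap_eq,
    Matrix.cons_val_zero, Matrix.cons_val_one]
  ring

lemma exists_aeval_blowup_conic_eq_X_one_mul_iff (a b c d e k : R) :
    (∃ g, aeval ![(X 0 : MvPolynomial (Fin 2) R) * X 1, X 1] (conic a b c d e k) = X 1 * g ∧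
      eval ![(0 : R), 0] g = 0) ↔ a = 0 ∧ c = 0 := by
  simp_rw [aeval_blowup_conic]
  constructor
  · rintro ⟨g, hg, hg₀⟩
    obtain rfl : a = 0 := by simpa using congrArg (eval ![(0 : R), 0]) hg
    rw [C_0, zero_add, X_mul_cancel_left_iff] at hg
    subst hg
    simpa using hg₀
  · rintro ⟨rfl, rfl⟩
    exact ⟨_, by rw [C_0, zero_add], by simp⟩

lemma smul_add_smul_eq_conic (s t : R) :
    s • ((X 0 : MvPolynomial (Fin 2) R) ^ 2 + X 1 ^ 2) + t • (X 0 + X 1 ^ 2) =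
      conic 0 t 0 s 0 (s + t) := by
  simp only [conic, smul_eq_C_mul, C_0, C_add]
  ring

end Conic

lemma finrank_span_pair_eq_two {K V : Type*} [DivisionRing K] [AddCommGroup V] [Module K V]
    {x y : V} (h : LinearIndependent K ![x, y]) : Module.finrank K (Submodule.span K {x, y}) = 2 := by
  rw [← Matrix.range_cons_cons_empty x y ![], finrank_span_eq_card h, Fintype.card_fin]

lemma linearIndependent_X_zero_sq_add_X_one_sq_X_zero_add_X_one_sq {R : Type*} [CommRing R] :
    LinearIndependent R ![(X 0 : MvPolynomial (Fin 2) R) ^ 2 + X 1 ^ 2, X 0 + X 1 ^ 2] := by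
  rw [LinearIndependent.pair_iff]
  intro s t hst
  rw [smul_add_smul_eq_conic, conic_eq_zero_iff] at hst
  exact ⟨hst.2.2.2.1, hst.2.1⟩

/-- The set of polynomials `f ∈ ℂ[u,v]` of total degree at most `2`
such that `f(0,0) = 0`, `f(1,−i) = 0`, `f(1,i) = 0`, and such that `f(u·v,v)` is
divisible by `v` with the quotient vanishing at the origin, is a 2-dimensional
`ℂ`-linear subspace equal to the span of `{u² + v², u + v²}`.
Here `u = X 0`, `v = X 1`. -/
theorem set_basepoints_example :
    {f : MvPolynomial (Fin 2) ℂ | f.totalDegree ≤ 2 ∧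
        eval ![(0 : ℂ), 0] f = 0 ∧
        eval ![(1 : ℂ), -Complex.I] f = 0 ∧
        eval ![(1 : ℂ), Complex.I] f = 0 ∧
        ∃ g : MvPolynomial (Fin 2) ℂ,
          aeval ![(X 0 : MvPolynomial (Fin 2) ℂ) * X 1, X 1] f = X 1 * g ∧
          eval ![(0 : ℂ), 0] g = 0} =
      ↑(Submodule.span ℂ
        ({(X 0 : MvPolynomial (Fin 2) ℂ) ^ 2 + X 1 ^ 2, X 0 + X 1 ^ 2} :
          Set (MvPolynomial (Fin 2) ℂ))) ∧
    Module.finrank ℂ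
        (Submodule.span ℂ
          ({(X 0 : MvPolynomial (Fin 2) ℂ) ^ 2 + X 1 ^ 2, X 0 + X 1 ^ 2} :
            Set (MvPolynomial (Fin 2) ℂ))) = 2 := by
  refine ⟨?_, finrank_span_pair_eq_two linearIndependent_X_zero_sq_add_X_one_sq_X_zero_add_X_one_sq⟩
  have hI := Complex.I_sq
  ext f
  simp only [Set.mem_ofPred_eq, SetLike.mem_coe, Submodule.mem_span_pair, smul_add_smul_eq_conic]
  constructor
  · rintro ⟨hdeg, -, hm, hp, hblowup⟩
    obtain ⟨a, b, c, d, e, k, rfl⟩ : ∃ a b c d e k, f = conic a b c d e k :=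
      ⟨_, _, _, _, _, _, eq_conic_of_totalDegree_le_two hdeg⟩
    obtain ⟨rfl, rfl⟩ := (exists_aeval_blowup_conic_eq_X_one_mul_iff ..).1 hblowup
    simp only [eval_conic] at hm hp
    have he : e = 0 := by linear_combination (Complex.I / 2) * (hm - hp) + e * hI
    have hk : k = d + b := by linear_combination -(hm + hp) / 2 + k * hI
    exact ⟨d, b, by rw [he, hk]⟩
  · rintro ⟨s, t, rfl⟩
    refine ⟨totalDegree_conic_le .., by simp, ?_, ?_,
      (exists_aeval_blowup_conic_eq_X_one_mul_iff ..).2 ⟨rfl, rfl⟩⟩ <;>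
    · simp only [eval_conic]
      linear_combination (s + t) * hI
end

section
/- Let F be a field. A projective point y = (y₀:y₁:y₂:y₃:y₄) of X lies in the image of the map P (i.e., y is projectively equivalent to (x₀² : x₀x₁ : x₀x₂ : x₁² : x₁x₂) for some (x₀,x₁,x₂) with (x₀,x₁) ≠ (0,0)) if and only if (y₀, y₁, y₃) ≠ (0,0,0). Consequently the set of points of X not reachable by the parametrization P is exactly the curve E = {(0:0:s:0:t) : (s,t) ≠ (0,0)}, and every point (0:0:s:0:t) lies on X. -/
/-!
On `X` we have `y₁² = y₀y₃`. If `y₀ ≠ 0`, the remaining equations give `y₃ = y₁²/y₀` and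
`y₄ = y₁y₂/y₀`, so `y = y₀⁻¹ • P(y₀, y₁, y₂)`. If `y₀ = 0`, then `y₁ = 0` and `y₂y₃ = 0`, so when
`y₃ ≠ 0` also `y₂ = 0` and `y = y₃⁻¹ • P(0, y₃, y₄)`. Conversely, the coordinates
`(x₀², x₀x₁, x₁²)` of `P x` vanish together only when `x₀ = x₁ = 0`.
-/

/-- The parametrization `P : ℙ² ⇢ ℙ⁴`, `(x₀:x₁:x₂) ↦ (x₀² : x₀x₁ : x₀x₂ : x₁² : x₁x₂)`,
on coordinate representatives. -/
def Pmap {F : Type*} [Field F] (x : Fin 3 → F) : Fin 5 → F :=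
  ![x 0 ^ 2, x 0 * x 1, x 0 * x 2, x 1 ^ 2, x 1 * x 2]

/-- The defining equations of the cubic surface `X ⊂ ℙ⁴`:
`y₂y₃ − y₁y₄ = y₁y₂ − y₀y₄ = y₁² − y₀y₃ = 0`. -/
def OnX {F : Type*} [Field F] (y : Fin 5 → F) : Prop :=
  y 2 * y 3 - y 1 * y 4 = 0 ∧ y 1 * y 2 - y 0 * y 4 = 0 ∧ y 1 ^ 2 - y 0 * y 3 = 0

theorem eq_vec_of_apply_zero_one_three_eq_zero {M : Type*} [Zero M] {y : Fin 5 → M}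
    (h0 : y 0 = 0) (h1 : y 1 = 0) (h3 : y 3 = 0) : y = ![0, 0, y 2, 0, y 4] := by
  funext i
  fin_cases i <;> simp [h0, h1, h3]

section

variable {F : Type*} [Field F]

theorem smul_Pmap_apply_zero_one_three_eq_zero_iff {c : F} (hc : c ≠ 0) (x : Fin 3 → F) :
    ((c • Pmap x) 0 = 0 ∧ (c • Pmap x) 1 = 0 ∧ (c • Pmap x) 3 = 0) ↔ (x 0 = 0 ∧ x 1 = 0) := by
  simp +contextual [Pmap, hc]

theorem onX_vec_zero_zero_s_zero_t (s t : F) : OnX ![0, 0, s, 0, t] := by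
  simp [OnX]

namespace OnX

variable {y : Fin 5 → F}

theorem apply_one_eq_zero (hy : OnX y) (h0 : y 0 = 0) : y 1 = 0 := by
  have h := hy.2.2
  rw [h0, zero_mul, sub_zero] at h
  exact pow_eq_zero_iff two_ne_zero |>.mp h

theorem eq_inv_smul_Pmap_of_apply_zero_ne_zero (hy : OnX y) (h0 : y 0 ≠ 0) :
    y = (y 0)⁻¹ • Pmap ![y 0, y 1, y 2] := by
  obtain ⟨-, h4, h3⟩ := hy
  funext i
  fin_cases i <;> simp [Pmap] <;> field_simp
  · linear_combination -h3
  · linear_combination -h4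

theorem eq_inv_smul_Pmap_of_apply_three_ne_zero (hy : OnX y) (h0 : y 0 = 0) (h3 : y 3 ≠ 0) :
    y = (y 3)⁻¹ • Pmap ![0, y 3, y 4] := by
  have h1 := hy.apply_one_eq_zero h0
  have h2 : y 2 = 0 := by
    have h := hy.1
    rw [h1, zero_mul, sub_zero] at h
    exact (mul_eq_zero.mp h).resolve_right h3
  funext i
  fin_cases i <;> simp [Pmap, h0, h1, h2] <;> field_simp

end OnX

end

/-- A projective point `y` of `X` lies in the image of `P` (i.e. is
projectively equivalent to `P x` for some `x` with `(x₀,x₁) ≠ (0,0)`) iff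
`(y₀,y₁,y₃) ≠ (0,0,0)`.  Consequently the unreachable points of `X` are exactly the
exceptional curve `E = {(0:0:s:0:t) : (s,t) ≠ (0,0)}`, and every `(0:0:s:0:t)` lies
on `X`. -/
theorem unreachable_curve_of_P (F : Type*) [Field F] :
    (∀ y : Fin 5 → F, y ≠ 0 → OnX y →
      ((∃ x : Fin 3 → F, ¬ (x 0 = 0 ∧ x 1 = 0) ∧ ∃ c : F, c ≠ 0 ∧ y = c • Pmap x) ↔
        ¬ (y 0 = 0 ∧ y 1 = 0 ∧ y 3 = 0))) ∧
    (∀ y : Fin 5 → F, y ≠ 0 → OnX y → (y 0 = 0 ∧ y 1 = 0 ∧ y 3 = 0) →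
      ∃ s t : F, ¬ (s = 0 ∧ t = 0) ∧ y = ![0, 0, s, 0, t]) ∧
    ∀ s t : F, ¬ (s = 0 ∧ t = 0) →
      (![0, 0, s, 0, t] : Fin 5 → F) ≠ 0 ∧ OnX (![0, 0, s, 0, t] : Fin 5 → F) := by
  refine ⟨fun y _ hX => ⟨?_, fun hne => ?_⟩, fun y hy _ ⟨h0, h1, h3⟩ => ?_,
    fun s t hst => ⟨by simpa using hst, onX_vec_zero_zero_s_zero_t s t⟩⟩
  · rintro ⟨x, hx, c, hc, rfl⟩ h
    exact hx ((smul_Pmap_apply_zero_one_three_eq_zero_iff hc x).mp h)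
  · by_cases h0 : y 0 = 0
    · have h3 : y 3 ≠ 0 := fun h3 => hne ⟨h0, hX.apply_one_eq_zero h0, h3⟩
      exact ⟨![0, y 3, y 4], by simp [h3], (y 3)⁻¹, inv_ne_zero h3,
        hX.eq_inv_smul_Pmap_of_apply_three_ne_zero h0 h3⟩
    · exact ⟨![y 0, y 1, y 2], by simp [h0], (y 0)⁻¹, inv_ne_zero h0,
        hX.eq_inv_smul_Pmap_of_apply_zero_ne_zero h0⟩
  · have hy' := eq_vec_of_apply_zero_one_three_eq_zero h0 h1 h3
    refine ⟨y 2, y 4, fun ⟨h2, h4⟩ => hy ?_, hy'⟩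
    rw [hy', h2, h4]
    simp
end

section
/- Let F be a field. The four polynomials x₀² − x₀x₁, x₀x₂, x₁², x₁x₂ have a common zero at a point (x₀,x₁,x₂) ≠ (0,0,0) if and only if x₀ = x₁ = 0. Hence the base locus of the map Q is the single projective point (0:0:1), and it is a basepoint of multiplicity one: the minimum over the four polynomials of the multiplicity at (0,0) of their dehomogenizations at x₂ = 1 (namely u² − uv, u, v², v in F[u,v] with u = x₀, v = x₁) equals 1. -/
/-!
Since `x₁² = 0` forces `x₁ = 0`, the first component becomes `x₀²`, forcing `x₀ = 0`; conversely
every component vanishes once `x₀ = x₁ = 0`. The dehomogenizations have no constant term, so every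
monomial in them has degree at least one, and `u` itself is a monomial of degree one.
-/

open MvPolynomial

theorem Q_components_eq_zero_iff {R : Type*} [CommRing R] [IsReduced R] (x₀ x₁ x₂ : R) :
    (x₀ ^ 2 - x₀ * x₁ = 0 ∧ x₀ * x₂ = 0 ∧ x₁ ^ 2 = 0 ∧ x₁ * x₂ = 0) ↔ (x₀ = 0 ∧ x₁ = 0) := by
  constructor
  · rintro ⟨h₀₀, -, h₁₁, -⟩
    obtain rfl : x₁ = 0 := pow_eq_zero_iff two_ne_zero |>.mp h₁₁
    exact ⟨pow_eq_zero_iff two_ne_zero |>.mp (by simpa using h₀₀), rfl⟩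
  · rintro ⟨rfl, rfl⟩
    simp

theorem MvPolynomial.one_le_degree_of_constantCoeff_eq_zero {σ R : Type*} [CommSemiring R]
    {f : MvPolynomial σ R} (hf : constantCoeff f = 0) {d : σ →₀ ℕ} (hd : d ∈ f.support) :
    1 ≤ d.degree := by
  rw [Nat.one_le_iff_ne_zero, Ne, Finsupp.degree_eq_zero_iff]
  rintro rfl
  exact mem_support_iff.mp hd hf

theorem MvPolynomial.one_le_fin_two_add_of_constantCoeff_eq_zero {R : Type*} [CommSemiring R]
    {f : MvPolynomial (Fin 2) R} (hf : constantCoeff f = 0) {d : Fin 2 →₀ ℕ} (hd : d ∈ f.support) :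
    1 ≤ d 0 + d 1 := by
  simpa [Finsupp.degree_eq_sum, Fin.sum_univ_two] using one_le_degree_of_constantCoeff_eq_zero hf hd

/-- The four polynomials `x₀² − x₀x₁, x₀x₂, x₁², x₁x₂` have a common
zero at a nonzero point iff `x₀ = x₁ = 0`; hence the base locus of `Q` is the single
projective point `(0:0:1)`.  It is a basepoint of multiplicity one: the dehomogenizations
`u² − uv, u, v², v` (with `u = X 0`, `v = X 1`) are nonzero, every monomial in their
supports has total degree at least `1`, and total degree exactly `1` is attained, so the
minimum of their multiplicities at the origin equals `1`. -/
theorem base_locus_of_Q (F : Type*) [Field F] :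
    (∀ x₀ x₁ x₂ : F, (x₀, x₁, x₂) ≠ (0, 0, 0) →
      ((x₀ ^ 2 - x₀ * x₁ = 0 ∧ x₀ * x₂ = 0 ∧ x₁ ^ 2 = 0 ∧ x₁ * x₂ = 0) ↔
        (x₀ = 0 ∧ x₁ = 0))) ∧
    (∀ x₀ x₁ x₂ : F, (x₀, x₁, x₂) ≠ (0, 0, 0) →
      (x₀ ^ 2 - x₀ * x₁ = 0 ∧ x₀ * x₂ = 0 ∧ x₁ ^ 2 = 0 ∧ x₁ * x₂ = 0) →
      ∃ c : F, c ≠ 0 ∧ (x₀, x₁, x₂) = (0, 0, c)) ∧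
    (∀ f ∈ ({X 0 ^ 2 - X 0 * X 1, X 0, X 1 ^ 2, X 1} : Set (MvPolynomial (Fin 2) F)),
      f ≠ 0 ∧ ∀ d ∈ f.support, 1 ≤ d 0 + d 1) ∧
    ∃ f ∈ ({X 0 ^ 2 - X 0 * X 1, X 0, X 1 ^ 2, X 1} : Set (MvPolynomial (Fin 2) F)),
      ∃ d ∈ f.support, d 0 + d 1 = 1 := by
  refine ⟨fun x₀ x₁ x₂ _ ↦ Q_components_eq_zero_iff x₀ x₁ x₂, ?_, ?_, ?_⟩
  · intro x₀ x₁ x₂ hne h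
    obtain ⟨rfl, rfl⟩ := (Q_components_eq_zero_iff x₀ x₁ x₂).mp h
    exact ⟨x₂, by rintro rfl; exact hne rfl, rfl⟩
  · have hX0X1 : (X 0 ^ 2 - X 0 * X 1 : MvPolynomial (Fin 2) F) ≠ 0 := by
      intro h
      simpa using congrArg (eval ![1, 0]) h
    rintro f (rfl | rfl | rfl | rfl)
    · exact ⟨hX0X1, fun _ ↦ one_le_fin_two_add_of_constantCoeff_eq_zero (by simp)⟩
    · exact ⟨X_ne_zero 0, fun _ ↦ one_le_fin_two_add_of_constantCoeff_eq_zero (by simp)⟩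
    · exact ⟨pow_ne_zero _ (X_ne_zero 1), fun _ ↦ one_le_fin_two_add_of_constantCoeff_eq_zero (by simp)⟩
    · exact ⟨X_ne_zero 1, fun _ ↦ one_le_fin_two_add_of_constantCoeff_eq_zero (by simp)⟩
  · exact ⟨X 0, by simp, Finsupp.single 0 1, by simp [support_X], by simp⟩
end
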